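/- arXiv:1711.06865 — 4 statements merged into one kernel-verified Lean document; each statement's English description precedes it below -/
import Mathlib

section
/- For any molecule N with n sites (arbitrary binding energies in ℂ* and interaction energies in ℂ*), there exists a decoupled molecule M with n sites (possibly complex binding energies, all interaction energies 1) with the same binding polynomial: P_M = P_N. Moreover M is unique up to permutation of its binding energies. -/
open Polynomial

/-- The binding polynomial of a molecule with `n` sites, binding energies `g` and
interaction energies `w` (used symmetrically). -/
noncomputable def bindingPoly (n : ℕ) (g : Fin n → ℂ) (w : Fin n → Fin n → ℂ) :
    Polynomial ℂ :=
  ∑ S : Finset (Fin n),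
    C ((∏ i ∈ S, g i) *
        ∏ p ∈ Finset.univ.filter
          (fun p : Fin n × Fin n => p.1 < p.2 ∧ p.1 ∈ S ∧ p.2 ∈ S), w p.1 p.2) *
      X ^ S.card

/-!
A decoupled molecule with binding energies `h i` has binding polynomial `∏ i, (1 + h i Λ)`.
The binding polynomial of any molecule has constant term `1` and, all energies being nonzero,
degree `n`. Over `ℂ` it splits, its roots `r` are nonzero because of the constant term, and
comparing constant terms in `P = c ∏ (Λ - r)` gives `P = ∏ (1 - Λ / r)`: this is a decoupled
molecule with energies `-1 / r`. Conversely the energies of a decoupled molecule are recovered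
from the roots of its binding polynomial by the involution `z ↦ -z⁻¹`, so they are determined
as a multiset, that is, up to a permutation of the sites.
-/

open Finset

theorem Multiset.exists_fin_map_univ_val_eq {α : Type*} {n : ℕ} (s : Multiset α)
    (hs : Multiset.card s = n) : ∃ f : Fin n → α, univ.val.map f = s := by
  subst hs
  refine ⟨fun i => s.toList.get (i.cast (by simp)), ?_⟩
  rw [Fin.univ_val_map]
  conv_rhs => rw [← Multiset.coe_toList s]
  exact congrArg _ (List.ext_get (by simp) (by simp))

theorem Equiv.Perm.exists_eq_comp_of_map_univ_val_eq {α β : Type*} [Fintype α] {f g : α → β}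
    (hfg : univ.val.map f = univ.val.map g) : ∃ σ : Equiv.Perm α, g = f ∘ σ := by
  classical
  have hfiber : ∀ b, Fintype.card {a // g a = b} = Fintype.card {a // f a = b} := fun b => by
    have hcount := congrArg (Multiset.count b) hfg
    simp only [Multiset.count_map] at hcount
    simpa [Fintype.card_subtype, Finset.card_def, eq_comm] using hcount.symm
  exact ⟨Equiv.ofFiberEquiv fun b => Fintype.equivOfCardEq (hfiber b),
    funext fun a => (Equiv.ofFiberEquiv_map _ a).symm⟩

theorem Polynomial.ne_zero_of_mem_roots_of_coeff_zero_ne_zero {K : Type*} [CommRing K]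
    [IsDomain K] {p : K[X]} (h0 : p.coeff 0 ≠ 0) {r : K} (hr : r ∈ p.roots) : r ≠ 0 := by
  rintro rfl
  exact h0 (by rw [coeff_zero_eq_eval_zero]; exact (isRoot_of_mem_roots hr))

theorem Polynomial.C_mul_X_add_one_eq {K : Type*} [Field K] {a : K} (ha : a ≠ 0) :
    C a * X + 1 = C a * (X - C (-a⁻¹)) := by
  rw [mul_sub, ← C_mul, mul_neg, mul_inv_cancel₀ ha, C_neg, C_1, sub_neg_eq_add]

theorem Polynomial.Splits.eq_prod_C_mul_X_add_one {K : Type*} [Field K] {p : K[X]}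
    (hp : p.Splits) (h0 : p.coeff 0 = 1) :
    p = (p.roots.map fun r => C (-r⁻¹) * X + 1).prod := by
  have hroots : ∀ r ∈ p.roots, r ≠ 0 :=
    fun r => ne_zero_of_mem_roots_of_coeff_zero_ne_zero (h0 ▸ one_ne_zero)
  have hfactor : p = C (p.leadingCoeff * (p.roots.map (-·)).prod) *
      (p.roots.map fun r => C (-r⁻¹) * X + 1).prod := by
    conv_lhs => rw [hp.eq_prod_roots]
    rw [C_mul, mul_assoc, map_multiset_prod, Multiset.map_map, ← Multiset.prod_map_mul]
    congr 2
    refine Multiset.map_congr rfl fun r hr => ?_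
    rw [Function.comp_apply, C_mul_X_add_one_eq (neg_ne_zero.2 (inv_ne_zero (hroots r hr))),
      inv_neg, inv_inv, neg_neg, ← mul_assoc, ← C_mul, neg_mul_neg,
      mul_inv_cancel₀ (hroots r hr), C_1, one_mul]
  have hprod_coeff_zero : (p.roots.map fun r => C (-r⁻¹) * X + 1).prod.coeff 0 = 1 := by
    simp [coeff_zero_multiset_prod, Multiset.map_map]
  have hc := congrArg (coeff · 0) hfactor
  rw [coeff_C_mul, hprod_coeff_zero, mul_one, h0, eq_comm] at hc
  rwa [hc, C_1, one_mul] at hfactor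

theorem Polynomial.roots_prod_C_mul_X_add_one {K ι : Type*} [Field K] (s : Finset ι)
    {a : ι → K} (ha : ∀ i ∈ s, a i ≠ 0) :
    (∏ i ∈ s, (C (a i) * X + 1)).roots = s.val.map fun i => -(a i)⁻¹ := by
  have hne : ∀ i ∈ s, C (a i) * X + 1 ≠ 0 := fun i hi => by
    rw [C_mul_X_add_one_eq (ha i hi)]
    exact mul_ne_zero (C_ne_zero.2 (ha i hi)) (X_sub_C_ne_zero _)
  rw [roots_prod _ _ (prod_ne_zero_iff.2 hne), ← Multiset.bind_singleton]
  refine Multiset.bind_congr fun i hi => ?_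
  rw [C_mul_X_add_one_eq (ha i hi), roots_C_mul _ (ha i hi), roots_X_sub_C]

theorem Polynomial.map_neg_inv_roots_prod_C_mul_X_add_one {K ι : Type*} [Field K]
    (s : Finset ι) {a : ι → K} (ha : ∀ i ∈ s, a i ≠ 0) :
    (∏ i ∈ s, (C (a i) * X + 1)).roots.map (fun r => -r⁻¹) = s.val.map a := by
  simp [roots_prod_C_mul_X_add_one s ha, Multiset.map_map]

section BindingPoly

variable {n : ℕ} (g : Fin n → ℂ) (w : Fin n → Fin n → ℂ)

noncomputable def stateWeight (S : Finset (Fin n)) : ℂ :=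
  (∏ i ∈ S, g i) *
    ∏ p ∈ univ.filter (fun p : Fin n × Fin n => p.1 < p.2 ∧ p.1 ∈ S ∧ p.2 ∈ S),
      w p.1 p.2

theorem coeff_bindingPoly (k : ℕ) :
    (bindingPoly n g w).coeff k = ∑ S ∈ powersetCard k univ, stateWeight g w S := by
  simp only [bindingPoly, finsetSum_coeff, coeff_C_mul_X_pow, powersetCard_eq_filter,
    sum_filter, stateWeight, eq_comm (a := k), powerset_univ]

theorem coeff_zero_bindingPoly : (bindingPoly n g w).coeff 0 = 1 := by
  simp [coeff_bindingPoly, stateWeight]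

theorem natDegree_bindingPoly (hg : ∀ i, g i ≠ 0) (hw : ∀ i j, w i j ≠ 0) :
    (bindingPoly n g w).natDegree = n := by
  have hlead : (bindingPoly n g w).coeff n ≠ 0 := by
    have hfull : powersetCard n (univ : Finset (Fin n)) = {univ} := by
      simpa using powersetCard_self (univ : Finset (Fin n))
    rw [coeff_bindingPoly, hfull, sum_singleton]
    exact mul_ne_zero (prod_ne_zero_iff.2 fun i _ => hg i)
      (prod_ne_zero_iff.2 fun p _ => hw p.1 p.2)
  refine le_antisymm (natDegree_le_iff_coeff_eq_zero.2 fun k hk => ?_)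
    (le_natDegree_of_ne_zero hlead)
  rw [coeff_bindingPoly, powersetCard_eq_empty.2 (by simpa using hk), sum_empty]

theorem bindingPoly_decoupled (h : Fin n → ℂ) :
    bindingPoly n h (fun _ _ => 1) = ∏ i, (C (h i) * X + 1) := by
  rw [prod_add, powerset_univ]
  refine sum_congr rfl fun S _ => ?_
  simp only [prod_const_one, mul_one, prod_mul_distrib, prod_const, map_prod]

end BindingPoly

theorem decoupled_sites_representation_general (n : ℕ) (g : Fin n → ℂ) (w : Fin n → Fin n → ℂ)
    (hg : ∀ i, g i ≠ 0) (hw : ∀ i j, w i j ≠ 0) :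
    ∃ h : Fin n → ℂ, (∀ i, h i ≠ 0) ∧
      bindingPoly n h (fun _ _ => 1) = bindingPoly n g w ∧
      ∀ h' : Fin n → ℂ, (∀ i, h' i ≠ 0) →
        bindingPoly n h' (fun _ _ => 1) = bindingPoly n g w →
        ∃ σ : Equiv.Perm (Fin n), h' = h ∘ σ := by
  set P := bindingPoly n g w
  have hsplit : P.Splits := IsAlgClosed.splits P
  have hcard : P.roots.card = n := by
    rw [splits_iff_card_roots.1 hsplit, natDegree_bindingPoly g w hg hw]
  obtain ⟨r, hr⟩ := P.roots.exists_fin_map_univ_val_eq hcard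
  have hr0 : ∀ i, r i ≠ 0 := fun i =>
    ne_zero_of_mem_roots_of_coeff_zero_ne_zero (by simp [P, coeff_zero_bindingPoly])
      (hr ▸ Multiset.mem_map_of_mem r (mem_univ_val i))
  set h : Fin n → ℂ := fun i => -(r i)⁻¹
  have hh_roots : univ.val.map h = P.roots.map fun r => -r⁻¹ := by
    rw [← hr, Multiset.map_map]; rfl
  refine ⟨h, fun i => by simpa [h] using hr0 i, ?_, fun h' hh'0 hP => ?_⟩
  · conv_rhs => rw [hsplit.eq_prod_C_mul_X_add_one (coeff_zero_bindingPoly g w)]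
    rw [bindingPoly_decoupled, prod_eq_multiset_prod, ← hr, Multiset.map_map]
    rfl
  · have hh'_roots := map_neg_inv_roots_prod_C_mul_X_add_one univ fun i _ => hh'0 i
    rw [← bindingPoly_decoupled, hP, ← hh_roots] at hh'_roots
    exact Equiv.Perm.exists_eq_comp_of_map_univ_val_eq hh'_roots

/-- Decoupled sites representation: every molecule `N` has a decoupled molecule `M`
with the same binding polynomial, unique up to relabelling of the sites. -/
theorem decoupled_sites_representation (n : ℕ) (g : Fin n → ℂ) (w : Fin n → Fin n → ℂ)
    (hg : ∀ i, g i ≠ 0) (hw : ∀ i j, w i j ≠ 0) (hsymm : ∀ i j, w i j = w j i) :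
    ∃ h : Fin n → ℂ, (∀ i, h i ≠ 0) ∧
      bindingPoly n h (fun _ _ => 1) = bindingPoly n g w ∧
      ∀ h' : Fin n → ℂ, (∀ i, h' i ≠ 0) →
        bindingPoly n h' (fun _ _ => 1) = bindingPoly n g w →
        ∃ σ : Equiv.Perm (Fin n), h' = h ∘ σ :=
  decoupled_sites_representation_general n g w hg hw
end

section
/- For generic parameters (a_1,...,a_n) ∈ ℂ^n (i.e., for all (a_1,...,a_n) in some nonempty Zariski-open subset of ℂ^n), the system a_k = e_k(w_1,...,w_n) + e_k(1/w_1,...,1/w_n), k = 1,...,n, has exactly 2·n! solutions (w_1,...,w_n) ∈ (ℂ*)^n. -/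
/-- The `k`-th elementary symmetric polynomial in `n` complex variables. -/
noncomputable def esymm (n k : ℕ) (g : Fin n → ℂ) : ℂ :=
  ∑ s ∈ Finset.powersetCard k (Finset.univ : Finset (Fin n)), ∏ i ∈ s, g i

/-!
With `E = ∏ wᵢ` one has `e_k(1/w) = e_{n-k}(w) / E`, so the equation for `k = n` reads
`E + 1/E = a_n`, and the equations for `k` and `n - k` form a linear system in `e_k(w)` and
`e_{n-k}(w)`. Hence, for each of the two roots `t` of `t² - a_n t + 1` (assumed `≠ ±1`), the
solutions with `E = t` are exactly the orderings of the roots of one explicit monic polynomial of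
degree `n` whose coefficients are rational in `a` and `t`; when it is separable there are `n!` of
them, `2 · n!` in total.

The genericity condition is the resultant in `t` of `t² - a_n t + 1` and `(t² - 1)` times the
resultant of that polynomial with its derivative, i.e. the product of the latter over both roots.
It is a nonzero polynomial in `a`, since it does not vanish at the parameters of
`w = (2, 3, …, n + 1)`.
-/

open Finset Polynomial

theorem Multiset.exists_fin_map_eq {α : Type*} {n : ℕ} (s : Multiset α) (hs : card s = n) :
    ∃ r : Fin n → α, univ.val.map r = s := by
  subst hs
  obtain ⟨l, rfl⟩ : ∃ l : List α, (l : Multiset α) = s := Quot.exists_rep s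
  exact ⟨l.get, (Fin.univ_val_map l.get).trans (by rw [List.ofFn_get])⟩

theorem ncard_range_comp_perm {α : Type*} {n : ℕ} {r : Fin n → α}
    (hr : Function.Injective r) :
    (Set.range fun σ : Equiv.Perm (Fin n) => r ∘ σ).ncard = n.factorial := by
  have hinj : Function.Injective fun σ : Equiv.Perm (Fin n) => r ∘ σ :=
    fun σ τ h => Equiv.ext fun i => hr (congrFun h i)
  rw [← Set.image_univ, Set.ncard_image_of_injective _ hinj, Set.ncard_univ,
    Nat.card_eq_fintype_card, Fintype.card_perm, Fintype.card_fin]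

theorem sq_sub_mul_add_one_eq_zero {K : Type*} [Field K] {s t₁ t₂ : K} (hsum : t₁ + t₂ = s)
    (hprod : t₁ * t₂ = 1) : t₁ ^ 2 - s * t₁ + 1 = 0 ∧ t₂ ^ 2 - s * t₂ + 1 = 0 := by
  subst hsum
  constructor <;> linear_combination -hprod

theorem exists_add_eq_mul_eq_one (s : ℂ) :
    ∃ t₁ t₂ : ℂ, t₁ + t₂ = s ∧ t₁ * t₂ = 1 := by
  obtain ⟨δ, hδ⟩ := IsAlgClosed.exists_pow_nat_eq (s ^ 2 - 4) two_pos
  exact ⟨(s + δ) / 2, (s - δ) / 2, by ring, by linear_combination (-1 / 4 : ℂ) * hδ⟩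

namespace Polynomial

section Vieta

variable {R : Type*} [CommRing R]

noncomputable def vieta (n : ℕ) (x : Fin (n + 1) → R) : R[X] :=
  ∑ j : Fin (n + 1), C ((-1) ^ (j : ℕ) * x j) * X ^ (n - j)

theorem coeff_vieta (n : ℕ) (x : Fin (n + 1) → R) (j : Fin (n + 1)) :
    (vieta n x).coeff (n - j) = (-1) ^ (j : ℕ) * x j := by
  rw [vieta, finsetSum_coeff, Finset.sum_eq_single j]
  · rw [coeff_C_mul_X_pow, if_pos rfl]
  · intro i _ hij
    rw [coeff_C_mul_X_pow, if_neg]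
    omega
  · simp

theorem vieta_injective (n : ℕ) : Function.Injective (vieta (R := R) n) := by
  intro x y h
  funext j
  have := coeff_vieta n x j
  rw [h, coeff_vieta] at this
  exact (((isUnit_neg_one (α := R)).pow _).mul_left_cancel this).symm

theorem natDegree_vieta_le (n : ℕ) (x : Fin (n + 1) → R) : (vieta n x).natDegree ≤ n :=
  natDegree_sum_le_of_forall_le _ _ fun _ _ => (natDegree_C_mul_X_pow_le _ _).trans (by omega)

theorem coeff_vieta_top (n : ℕ) (x : Fin (n + 1) → R) : (vieta n x).coeff n = x 0 := by
  simpa using coeff_vieta n x 0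

theorem monic_vieta {n : ℕ} {x : Fin (n + 1) → R} (hx : x 0 = 1) : (vieta n x).Monic :=
  monic_of_natDegree_le_of_coeff_eq_one n (natDegree_vieta_le n x) (by
    rw [coeff_vieta_top, hx])

theorem natDegree_vieta [Nontrivial R] {n : ℕ} {x : Fin (n + 1) → R} (hx : x 0 = 1) :
    (vieta n x).natDegree = n :=
  natDegree_eq_of_le_of_coeff_ne_zero (natDegree_vieta_le n x) (by
    rw [coeff_vieta_top, hx]; exact one_ne_zero)

theorem map_vieta {S : Type*} [CommRing S] (f : R →+* S) (n : ℕ) (x : Fin (n + 1) → R) :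
    (vieta n x).map f = vieta n (f ∘ x) := by
  simp [vieta, Polynomial.map_sum]

theorem C_mul_vieta (r : R) (n : ℕ) (x : Fin (n + 1) → R) :
    C r * vieta n x = vieta n (r • x) := by
  simp only [vieta, Finset.mul_sum, Pi.smul_apply, smul_eq_mul, map_mul, ← mul_assoc]
  refine Finset.sum_congr rfl fun j _ => ?_
  ring

end Vieta

section Roots

variable {K : Type*} [Field K]

theorem exists_prod_X_sub_C_eq [IsAlgClosed K] {p : K[X]} (hp : p.Monic) {n : ℕ}
    (hn : p.natDegree = n) : ∃ r : Fin n → K, ∏ i, (X - C (r i)) = p := by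
  have hcard : Multiset.card p.roots = p.natDegree :=
    (IsAlgClosed.splits p).natDegree_eq_card_roots.symm
  obtain ⟨r, hr⟩ := p.roots.exists_fin_map_eq (hcard.trans hn)
  refine ⟨r, ?_⟩
  rw [← prod_multiset_X_sub_C_of_monic_of_roots_card_eq hp hcard, ← hr, Multiset.map_map,
    prod_eq_multiset_prod]
  rfl

theorem setOf_prod_X_sub_C_eq_range {n : ℕ} {r : Fin n → K} (hr : Function.Injective r) :
    {w : Fin n → K | ∏ i, (X - C (w i)) = ∏ i, (X - C (r i))} =
      Set.range fun σ : Equiv.Perm (Fin n) => r ∘ σ := by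
  ext w
  constructor
  · intro hw
    have hw_inj : Function.Injective w :=
      separable_prod_X_sub_C_iff.mp (hw ▸ separable_prod_X_sub_C_iff.mpr hr)
    have hroot : ∀ i, ∃ j, r j = w i := fun i => by
      have : eval (w i) (∏ j, (X - C (r j))) = 0 := by
        rw [← hw.out, eval_prod]
        exact prod_eq_zero (mem_univ i) (by simp)
      obtain ⟨j, -, hj⟩ := prod_eq_zero_iff.mp (by simpa [eval_prod] using this)
      exact ⟨j, (sub_eq_zero.mp hj).symm⟩
    choose τ hτ using hroot
    have hτ_inj : Function.Injective τ := fun i i' h => hw_inj (by rw [← hτ, ← hτ, h])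
    exact ⟨Equiv.ofBijective τ (Finite.injective_iff_bijective.mp hτ_inj),
      _root_.funext fun i => hτ i⟩
  · rintro ⟨σ, rfl⟩
    exact Equiv.prod_comp σ fun i => X - C (r i)

theorem ncard_setOf_prod_X_sub_C_eq [IsAlgClosed K] {p : K[X]} (hp : p.Monic)
    (hsep : p.Separable) {n : ℕ} (hn : p.natDegree = n) :
    {w : Fin n → K | ∏ i, (X - C (w i)) = p}.ncard = n.factorial := by
  obtain ⟨r, rfl⟩ := exists_prod_X_sub_C_eq hp hn
  rw [setOf_prod_X_sub_C_eq_range (separable_prod_X_sub_C_iff.mp hsep),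
    ncard_range_comp_perm (separable_prod_X_sub_C_iff.mp hsep)]

end Roots

theorem resultant_derivative_ne_zero_iff {K : Type*} [Field K] [CharZero K] {p : K[X]}
    (hp : p ≠ 0) :
    resultant p (derivative p) p.natDegree (p.natDegree - 1) ≠ 0 ↔ p.Separable := by
  rw [← natDegree_derivative, Ne, resultant_eq_zero_iff]
  simp [hp, Separable]

theorem resultant_X_sub_C_mul_X_sub_C_left {R : Type*} [CommRing R] (t₁ t₂ : R) {g : R[X]}
    {N : ℕ} (hg : g.natDegree ≤ N) :
    resultant ((X - C t₁) * (X - C t₂)) g 2 N = g.eval t₁ * g.eval t₂ := by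
  nontriviality R
  have h := resultant_mul_left (X - C t₁) (X - C t₂) g N hg
  rw [natDegree_X_sub_C, natDegree_X_sub_C, resultant_X_sub_C_left _ _ _ hg,
    resultant_X_sub_C_left _ _ _ hg] at h
  exact h

end Polynomial

theorem esymm_eq_multiset_esymm (n k : ℕ) (g : Fin n → ℂ) :
    esymm n k g = (univ.val.map g).esymm k :=
  (Finset.esymm_map_val _ _ _).symm

theorem esymm_zero (n : ℕ) (g : Fin n → ℂ) : esymm n 0 g = 1 := by
  simp [esymm]

theorem esymm_self (n : ℕ) (g : Fin n → ℂ) : esymm n n g = ∏ i, g i := by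
  have : powersetCard n (univ : Finset (Fin n)) = {univ} := by
    simpa using powersetCard_self (univ : Finset (Fin n))
  rw [esymm, this, sum_singleton]

theorem prod_X_sub_C_eq_vieta (n : ℕ) (w : Fin n → ℂ) :
    ∏ i, (X - C (w i)) = vieta n (fun j => esymm n j w) := by
  have h := Multiset.prod_X_sub_X_eq_sum_esymm (univ.val.map w)
  rw [Multiset.map_map, Function.comp_def, Multiset.card_map, card_val, card_univ, Fintype.card_fin,
    ← Fin.sum_univ_eq_sum_range
      (fun j => (-1) ^ j * (C ((univ.val.map w).esymm j) * X ^ (n - j)))] at h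
  rw [Finset.prod_eq_multiset_prod, vieta]
  convert h using 2 with j
  rw [esymm_eq_multiset_esymm, map_mul, map_pow, map_neg, map_one, mul_assoc]

theorem esymm_inv_mul_prod {n : ℕ} {w : Fin n → ℂ} (hw : ∀ i, w i ≠ 0) {j : ℕ}
    (hj : j ≤ n) :
    esymm n j (fun i => (w i)⁻¹) * ∏ i, w i = esymm n (n - j) w := by
  rw [esymm, esymm, sum_mul]
  refine sum_nbij' (fun s => sᶜ) (fun s => sᶜ) ?_ ?_ (fun s _ => compl_compl s)
    (fun s _ => compl_compl s) fun s _ => ?_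
  · intro s hs
    simp only [mem_powersetCard] at hs ⊢
    simp [card_compl, hs.2]
  · intro s hs
    simp only [mem_powersetCard] at hs ⊢
    simp only [subset_univ, card_compl, Fintype.card_fin, hs.2, true_and]
    omega
  · rw [← prod_mul_prod_compl s w, ← mul_assoc, ← prod_mul_distrib,
      prod_congr rfl fun i _ => inv_mul_cancel₀ (hw i), prod_const_one, one_mul]

section Branches

variable {R : Type*} [CommRing R] {n : ℕ}

/-- On the branch `∏ wᵢ = t`, the equations `a_j = e_j(w) + e_{n-j}(w) / t` for `j` and `n - j`
form a linear system whose solution is `(t² - 1) e_j(w) = t (t a_j - a_{n-j})`. -/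
def branchNum (b : Fin (n + 1) → R) (t : R) (j : Fin (n + 1)) : R :=
  t * (t * b j - b j.rev)

noncomputable def branchPoly (b : Fin (n + 1) → R) (t : R) : R[X] :=
  vieta n (branchNum b t)

theorem map_branchPoly {S : Type*} [CommRing S] (f : R →+* S) (b : Fin (n + 1) → R) (t : R) :
    (branchPoly b t).map f = branchPoly (f ∘ b) (f t) := by
  rw [branchPoly, map_vieta]
  congr 1
  funext j
  simp [branchNum]

variable {K : Type*} [Field K]

noncomputable def branchMonic (b : Fin (n + 1) → K) (t : K) : K[X] :=
  vieta n fun j => branchNum b t j / (t ^ 2 - 1)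

theorem branchPoly_eq_C_mul_branchMonic (b : Fin (n + 1) → K) {t : K} (ht : t ^ 2 ≠ 1) :
    branchPoly b t = C (t ^ 2 - 1) * branchMonic b t := by
  rw [branchMonic, C_mul_vieta, branchPoly]
  congr 1
  funext j
  simp [mul_div_cancel₀ _ (sub_ne_zero_of_ne ht)]

theorem branchNum_zero_div {b : Fin (n + 1) → K} (hb : b 0 = 2) {t : K}
    (hroot : t ^ 2 - b (Fin.last n) * t + 1 = 0) (ht : t ^ 2 ≠ 1) :
    branchNum b t 0 / (t ^ 2 - 1) = 1 := by
  rw [div_eq_one_iff_eq (sub_ne_zero_of_ne ht), branchNum, Fin.rev_zero, hb]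
  linear_combination hroot

theorem monic_branchMonic {b : Fin (n + 1) → K} (hb : b 0 = 2) {t : K}
    (hroot : t ^ 2 - b (Fin.last n) * t + 1 = 0) (ht : t ^ 2 ≠ 1) : (branchMonic b t).Monic :=
  monic_vieta (branchNum_zero_div hb hroot ht)

theorem natDegree_branchMonic {b : Fin (n + 1) → K} (hb : b 0 = 2) {t : K}
    (hroot : t ^ 2 - b (Fin.last n) * t + 1 = 0) (ht : t ^ 2 ≠ 1) :
    (branchMonic b t).natDegree = n :=
  natDegree_vieta (branchNum_zero_div hb hroot ht)

theorem branchNum_last_div {b : Fin (n + 1) → K} (hb : b 0 = 2) {t : K}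
    (hroot : t ^ 2 - b (Fin.last n) * t + 1 = 0) (ht : t ^ 2 ≠ 1) :
    branchNum b t (Fin.last n) / (t ^ 2 - 1) = t := by
  rw [div_eq_iff (sub_ne_zero_of_ne ht), branchNum, Fin.rev_last, hb]
  linear_combination -t * hroot

theorem forall_eq_add_rev_div_iff {b x : Fin (n + 1) → K} {E : K} (hE : E ≠ 0)
    (hE2 : E ^ 2 ≠ 1) :
    (∀ j, b j = x j + x j.rev / E) ↔ ∀ j, x j = branchNum b E j / (E ^ 2 - 1) := by
  have hE2' : E ^ 2 - 1 ≠ 0 := sub_ne_zero_of_ne hE2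
  refine ⟨fun h j => ?_, fun h j => ?_⟩
  · have h₁ := h j
    have h₂ := h j.rev
    rw [Fin.rev_rev] at h₂
    rw [branchNum, eq_div_iff hE2', h₁, h₂]
    field_simp
    ring
  · rw [h j, h j.rev, branchNum, branchNum, Fin.rev_rev]
    field_simp
    ring

end Branches

section System

variable {n : ℕ}

def normalizedSolutions (a : Fin n → ℂ) : Set (Fin n → ℂ) :=
  {w | (∀ i, w i ≠ 0) ∧
    ∀ k : Fin n, a k = esymm n (k.1 + 1) w + esymm n (k.1 + 1) (fun i => (w i)⁻¹)}

/-- `a₀ := 2 = e₀(w) + e₀(1/w)` lets the equations be indexed by `Fin (n + 1)`, closed under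
`j ↦ n - j`. -/
def extendParams (a : Fin n → ℂ) : Fin (n + 1) → ℂ :=
  Fin.cons 2 a

theorem esymm_inv_eq_div {w : Fin n → ℂ} (hw : ∀ i, w i ≠ 0) (j : Fin (n + 1)) :
    esymm n j (fun i => (w i)⁻¹) = esymm n j.rev w / ∏ i, w i := by
  rw [eq_div_iff (prod_ne_zero_iff.mpr fun i _ => hw i), esymm_inv_mul_prod hw j.is_le,
    Fin.val_rev]
  congr 1
  omega

theorem mem_normalizedSolutions_iff {a w : Fin n → ℂ} :
    w ∈ normalizedSolutions a ↔ (∀ i, w i ≠ 0) ∧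
      ∀ j, extendParams a j = esymm n j w + esymm n j.rev w / ∏ i, w i := by
  refine and_congr_right fun hw => ?_
  simp only [← esymm_inv_eq_div hw, Fin.forall_fin_succ, extendParams, Fin.cons_zero,
    Fin.cons_succ, Fin.val_zero, Fin.val_succ, esymm_zero]
  norm_num

theorem prod_isRoot_of_mem_normalizedSolutions {a w : Fin n → ℂ}
    (hw : w ∈ normalizedSolutions a) :
    (∏ i, w i) ^ 2 - extendParams a (Fin.last n) * ∏ i, w i + 1 = 0 := by
  rw [mem_normalizedSolutions_iff] at hw
  have hE : ∏ i, w i ≠ 0 := prod_ne_zero_iff.mpr fun i _ => hw.1 i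
  rw [hw.2 (Fin.last n), Fin.rev_last, Fin.val_last, Fin.val_zero, esymm_self, esymm_zero]
  field_simp
  ring

theorem prod_X_sub_C_eq_branchMonic_iff {a w : Fin n → ℂ} {t : ℂ}
    (hroot : t ^ 2 - extendParams a (Fin.last n) * t + 1 = 0) (ht : t ^ 2 ≠ 1) :
    ∏ i, (X - C (w i)) = branchMonic (extendParams a) t ↔
      w ∈ normalizedSolutions a ∧ ∏ i, w i = t := by
  have ht0 : t ≠ 0 := by
    rintro rfl
    norm_num at hroot
  rw [prod_X_sub_C_eq_vieta, branchMonic, (vieta_injective n).eq_iff, funext_iff,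
    mem_normalizedSolutions_iff]
  constructor
  · intro h
    have hprod : ∏ i, w i = t := by
      have := h (Fin.last n)
      rwa [Fin.val_last, esymm_self, branchNum_last_div rfl hroot ht] at this
    have hw : ∀ i, w i ≠ 0 := fun i hi => ht0 (hprod ▸ prod_eq_zero (mem_univ i) hi)
    exact ⟨⟨hw, hprod ▸ (forall_eq_add_rev_div_iff ht0 ht).mpr h⟩, hprod⟩
  · rintro ⟨⟨hw, h⟩, rfl⟩
    exact (forall_eq_add_rev_div_iff ht0 ht).mp h

theorem inv_mem_normalizedSolutions {a w : Fin n → ℂ} (hw : w ∈ normalizedSolutions a) :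
    (fun i => (w i)⁻¹) ∈ normalizedSolutions a :=
  ⟨fun i => inv_ne_zero (hw.1 i), fun k => by simp only [inv_inv]; rw [hw.2 k, add_comm]⟩

theorem separable_branchMonic_of_mem {a w : Fin n → ℂ} (hw : w ∈ normalizedSolutions a)
    (hinj : Function.Injective w) (ht : (∏ i, w i) ^ 2 ≠ 1) :
    (branchMonic (extendParams a) (∏ i, w i)).Separable := by
  rw [← (prod_X_sub_C_eq_branchMonic_iff (prod_isRoot_of_mem_normalizedSolutions hw) ht).mpr
    ⟨hw, rfl⟩]
  exact separable_prod_X_sub_C_iff.mpr hinj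

theorem normalizedSolutions_eq_union {a : Fin n → ℂ} {t₁ t₂ : ℂ}
    (hsum : t₁ + t₂ = extendParams a (Fin.last n)) (hprod : t₁ * t₂ = 1)
    (h₁ : t₁ ^ 2 ≠ 1) (h₂ : t₂ ^ 2 ≠ 1) :
    normalizedSolutions a =
      {w | ∏ i, (X - C (w i)) = branchMonic (extendParams a) t₁} ∪
        {w | ∏ i, (X - C (w i)) = branchMonic (extendParams a) t₂} := by
  ext w
  rw [Set.mem_union, Set.mem_ofPred_eq, Set.mem_ofPred_eq,
    prod_X_sub_C_eq_branchMonic_iff (sq_sub_mul_add_one_eq_zero hsum hprod).1 h₁,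
    prod_X_sub_C_eq_branchMonic_iff (sq_sub_mul_add_one_eq_zero hsum hprod).2 h₂]
  refine ⟨fun hw => ?_, by rintro (⟨hw, -⟩ | ⟨hw, -⟩) <;> exact hw⟩
  have hE := prod_isRoot_of_mem_normalizedSolutions hw
  rw [← hsum] at hE
  have : (∏ i, w i - t₁) * (∏ i, w i - t₂) = 0 := by linear_combination hE + hprod
  rcases mul_eq_zero.mp this with h | h
  · exact Or.inl ⟨hw, sub_eq_zero.mp h⟩
  · exact Or.inr ⟨hw, sub_eq_zero.mp h⟩

theorem ncard_normalizedSolutions {a : Fin n → ℂ} {t₁ t₂ : ℂ}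
    (hsum : t₁ + t₂ = extendParams a (Fin.last n)) (hprod : t₁ * t₂ = 1)
    (h₁ : t₁ ^ 2 ≠ 1 ∧ (branchMonic (extendParams a) t₁).Separable)
    (h₂ : t₂ ^ 2 ≠ 1 ∧ (branchMonic (extendParams a) t₂).Separable) :
    (normalizedSolutions a).ncard = 2 * n.factorial := by
  obtain ⟨hroot₁, hroot₂⟩ := sq_sub_mul_add_one_eq_zero hsum hprod
  have hcard {t : ℂ} (hroot : t ^ 2 - extendParams a (Fin.last n) * t + 1 = 0)
      (ht : t ^ 2 ≠ 1 ∧ (branchMonic (extendParams a) t).Separable) :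
      {w : Fin n → ℂ | ∏ i, (X - C (w i)) = branchMonic (extendParams a) t}.ncard =
        n.factorial :=
    ncard_setOf_prod_X_sub_C_eq (monic_branchMonic rfl hroot ht.1) ht.2
      (natDegree_branchMonic rfl hroot ht.1)
  have hdisj :
      Disjoint {w : Fin n → ℂ | ∏ i, (X - C (w i)) = branchMonic (extendParams a) t₁}
        {w | ∏ i, (X - C (w i)) = branchMonic (extendParams a) t₂} := by
    refine Set.disjoint_left.mpr fun w hw₁ hw₂ => h₁.1 ?_
    rw [sq, ← hprod, ← ((prod_X_sub_C_eq_branchMonic_iff hroot₁ h₁.1).mp hw₁).2,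
      ((prod_X_sub_C_eq_branchMonic_iff hroot₂ h₂.1).mp hw₂).2]
  rw [normalizedSolutions_eq_union hsum hprod h₁.1 h₂.1, Set.ncard_union_eq hdisj
    (Set.finite_of_ncard_pos ((hcard hroot₁ h₁).symm ▸ n.factorial_pos))
    (Set.finite_of_ncard_pos ((hcard hroot₂ h₂).symm ▸ n.factorial_pos)),
    hcard hroot₁ h₁, hcard hroot₂ h₂, two_mul]

end System

section Generic

variable (n : ℕ)

noncomputable def genericParams : Fin (n + 1) → MvPolynomial (Fin n) ℂ :=
  Fin.cons 2 MvPolynomial.X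

noncomputable def genericBranch : (MvPolynomial (Fin n) ℂ)[X][X] :=
  branchPoly (C ∘ genericParams n) X

noncomputable def genericDisc : (MvPolynomial (Fin n) ℂ)[X] :=
  (X ^ 2 - 1) * resultant (genericBranch n) (derivative (genericBranch n)) n (n - 1)

noncomputable def genericPoly : MvPolynomial (Fin n) ℂ :=
  resultant (X ^ 2 - C (genericParams n (Fin.last n)) * X + 1) (genericDisc n) 2
    (genericDisc n).natDegree

variable {n}

theorem eval_comp_genericParams (a : Fin n → ℂ) :
    MvPolynomial.eval a ∘ genericParams n = extendParams a := by
  funext j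
  refine Fin.cases ?_ (fun i => ?_) j <;> simp [genericParams, extendParams]

theorem eval₂_genericDisc (a : Fin n → ℂ) (t : ℂ) :
    eval₂ (MvPolynomial.eval a) t (genericDisc n) =
      (t ^ 2 - 1) * resultant (branchPoly (extendParams a) t)
        (derivative (branchPoly (extendParams a) t)) n (n - 1) := by
  set ψ := eval₂RingHom (MvPolynomial.eval a) t
  have hB : (genericBranch n).map ψ = branchPoly (extendParams a) t := by
    rw [genericBranch, map_branchPoly, ← eval_comp_genericParams a,
      show ψ X = t from eval₂_X _ _]
    congr 1
    funext j
    exact eval₂_C _ _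
  change ψ (genericDisc n) = _
  rw [genericDisc, map_mul, ← resultant_map_map, hB, ← derivative_map, hB]
  simp [ψ]

theorem eval₂_genericDisc_ne_zero_iff {a : Fin n → ℂ} {t : ℂ}
    (hroot : t ^ 2 - extendParams a (Fin.last n) * t + 1 = 0) :
    eval₂ (MvPolynomial.eval a) t (genericDisc n) ≠ 0 ↔
      t ^ 2 ≠ 1 ∧ (branchMonic (extendParams a) t).Separable := by
  rw [eval₂_genericDisc]
  by_cases ht : t ^ 2 = 1
  · simp [ht]
  rw [branchPoly_eq_C_mul_branchMonic _ ht, derivative_C_mul, resultant_C_mul_left,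
    resultant_C_mul_right,
    ← resultant_derivative_ne_zero_iff (monic_branchMonic rfl hroot ht).ne_zero,
    natDegree_branchMonic rfl hroot ht]
  simp [ht, sub_ne_zero_of_ne ht]

theorem eval_genericPoly {a : Fin n → ℂ} {t₁ t₂ : ℂ}
    (hsum : t₁ + t₂ = extendParams a (Fin.last n)) (hprod : t₁ * t₂ = 1) :
    MvPolynomial.eval a (genericPoly n) =
      eval₂ (MvPolynomial.eval a) t₁ (genericDisc n) *
        eval₂ (MvPolynomial.eval a) t₂ (genericDisc n) := by
  have hQ : (X ^ 2 - C (genericParams n (Fin.last n)) * X + 1).map (MvPolynomial.eval a) =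
      (X - C t₁) * (X - C t₂) := by
    have hs : MvPolynomial.eval a (genericParams n (Fin.last n)) = t₁ + t₂ := by
      rw [hsum, ← eval_comp_genericParams a, Function.comp_apply]
    have hC : C t₁ * C t₂ = (1 : ℂ[X]) := by rw [← map_mul, hprod, map_one]
    simp only [Polynomial.map_add, Polynomial.map_sub, Polynomial.map_mul, Polynomial.map_pow,
      map_X, map_C, Polynomial.map_one, hs, map_add]
    linear_combination -hC
  rw [genericPoly, ← resultant_map_map, hQ,
    resultant_X_sub_C_mul_X_sub_C_left _ _ natDegree_map_le, eval_map, eval_map]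

theorem eval₂_genericDisc_prod_ne_zero {a w : Fin n → ℂ} (hw : w ∈ normalizedSolutions a)
    (hinj : Function.Injective w) (ht : (∏ i, w i) ^ 2 ≠ 1) :
    eval₂ (MvPolynomial.eval a) (∏ i, w i) (genericDisc n) ≠ 0 :=
  (eval₂_genericDisc_ne_zero_iff (prod_isRoot_of_mem_normalizedSolutions hw)).mpr
    ⟨ht, separable_branchMonic_of_mem hw hinj ht⟩

theorem genericPoly_ne_zero (hn : 0 < n) : genericPoly n ≠ 0 := by
  let w : Fin n → ℂ := fun i => ((i + 2 : ℕ) : ℂ)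
  have hw0 : ∀ i, w i ≠ 0 := fun i => Nat.cast_ne_zero.mpr (by omega)
  have hinj : Function.Injective w := fun i j h => Fin.ext (by simpa [w] using h)
  let a : Fin n → ℂ := fun k => esymm n (k.1 + 1) w + esymm n (k.1 + 1) (fun i => (w i)⁻¹)
  have hw : w ∈ normalizedSolutions a := ⟨hw0, fun k => rfl⟩
  have hN : 2 ≤ ∏ i : Fin n, ((i : ℕ) + 2) :=
    single_le_prod' (f := fun i : Fin n => (i : ℕ) + 2) (fun i _ => by omega)
      (mem_univ ⟨0, hn⟩)
  have hE : (∏ i, w i) ^ 2 ≠ 1 := by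
    rw [← Nat.cast_prod]
    intro h
    have : (∏ i : Fin n, ((i : ℕ) + 2)) ^ 2 = 1 := by exact_mod_cast h
    nlinarith
  have hE0 : ∏ i, w i ≠ 0 := prod_ne_zero_iff.mpr fun i _ => hw0 i
  have hprod : (∏ i, w i) * ∏ i, (w i)⁻¹ = 1 := by
    rw [prod_inv_distrib, mul_inv_cancel₀ hE0]
  have hsum : (∏ i, w i) + ∏ i, (w i)⁻¹ = extendParams a (Fin.last n) := by
    have hr := prod_isRoot_of_mem_normalizedSolutions hw
    rw [prod_inv_distrib]
    field_simp
    linear_combination hr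
  have hE' : (∏ i, (w i)⁻¹) ^ 2 ≠ 1 := by
    rwa [prod_inv_distrib, inv_pow, Ne, inv_eq_one]
  intro h
  have := eval_genericPoly hsum hprod
  rw [h, map_zero] at this
  exact mul_ne_zero (eval₂_genericDisc_prod_ne_zero hw hinj hE)
    (eval₂_genericDisc_prod_ne_zero (inv_mem_normalizedSolutions hw)
      (inv_injective.comp hinj) hE')
    this.symm

end Generic

/-- For generic parameters `a ∈ ℂ^n` (on a nonempty Zariski-open subset, i.e. the
complement of the zero set of some nonzero polynomial), the normalized system
`a_k = e_k(w) + e_k(1/w)`, `k = 1,...,n`, has exactly `2·n!` solutions in `(ℂ*)^n`. -/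
theorem generic_count (n : ℕ) (hn : 0 < n) :
    ∃ p : MvPolynomial (Fin n) ℂ, p ≠ 0 ∧
      ∀ a : Fin n → ℂ, MvPolynomial.eval a p ≠ 0 →
        {w : Fin n → ℂ | (∀ i, w i ≠ 0) ∧
            ∀ k : Fin n,
              a k = esymm n (k.1 + 1) w + esymm n (k.1 + 1) (fun i => (w i)⁻¹)}.ncard
          = 2 * Nat.factorial n := by
  refine ⟨genericPoly n, genericPoly_ne_zero hn, fun a ha => ?_⟩
  obtain ⟨t₁, t₂, hsum, hprod⟩ := exists_add_eq_mul_eq_one (extendParams a (Fin.last n))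
  obtain ⟨hroot₁, hroot₂⟩ := sq_sub_mul_add_one_eq_zero hsum hprod
  rw [eval_genericPoly hsum hprod, mul_ne_zero_iff, eval₂_genericDisc_ne_zero_iff hroot₁,
    eval₂_genericDisc_ne_zero_iff hroot₂] at ha
  exact ncard_normalizedSolutions hsum hprod ha.1 ha.2
end

section
/- A decoupled molecule with (n,2) sites has binding polynomial P(Λ_1,Λ_2) = ∑_{i,j} a_{i,j} Λ_1^i Λ_2^j which factors when restricted to the w-independent coefficients: a_{i,0} = e_i(g_1,...,g_n) for i = 1,...,n, a_{0,1} = g_A + g_B, a_{0,2} = g_A g_B, and a_{i,2} = g_A g_B · e_i(g_1 w_{1,A} w_{1,B}, ..., g_n w_{n,A} w_{n,B}) for i = 1,...,n. -/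
/-- Coefficient `a_{i,j}` of the binding polynomial of a decoupled molecule with
`(n,2)` sites: binding energies `g : Fin n → ℂ` and `gS : Fin 2 → ℂ`
(for the sites `A = 0`, `B = 1` of the second ligand), cross-interaction
energies `w k S`. -/
noncomputable def coeffA (n : ℕ) (g : Fin n → ℂ) (gS : Fin 2 → ℂ)
    (w : Fin n → Fin 2 → ℂ) (i j : ℕ) : ℂ :=
  ∑ I ∈ Finset.powersetCard i (Finset.univ : Finset (Fin n)),
    ∑ J ∈ Finset.powersetCard j (Finset.univ : Finset (Fin 2)),
      (∏ k ∈ I, g k) * (∏ S ∈ J, gS S) * ∏ k ∈ I, ∏ S ∈ J, w k S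

lemma pc1 : Finset.powersetCard 1 (Finset.univ : Finset (Fin 2)) = {{0}, {1}} := by decide

lemma pc2 : Finset.powersetCard 2 (Finset.univ : Finset (Fin 2)) = {Finset.univ} := by decide

/-- The coefficients of the binding polynomial of a decoupled `(n,2)`-molecule:
`a_{i,0} = e_i(g)`, `a_{0,1} = g_A + g_B`, `a_{0,2} = g_A g_B`, and
`a_{i,2} = g_A g_B · e_i(g_1 w_{1,A} w_{1,B}, ..., g_n w_{n,A} w_{n,B})`. -/
theorem coeffs_factor (n : ℕ) (g : Fin n → ℂ) (gS : Fin 2 → ℂ) (w : Fin n → Fin 2 → ℂ)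
    (hg : ∀ k, g k ≠ 0) (hgS : ∀ S, gS S ≠ 0) (hw : ∀ k S, w k S ≠ 0) :
    (∀ i, 1 ≤ i → i ≤ n → coeffA n g gS w i 0 = esymm n i g) ∧
    coeffA n g gS w 0 1 = gS 0 + gS 1 ∧
    coeffA n g gS w 0 2 = gS 0 * gS 1 ∧
    (∀ i, 1 ≤ i → i ≤ n →
      coeffA n g gS w i 2 = gS 0 * gS 1 * esymm n i (fun k => g k * w k 0 * w k 1)) := by
  refine ⟨fun i _ _ => ?_, ?_, ?_, fun i _ _ => ?_⟩
  · simp [coeffA, esymm, Finset.powersetCard_zero]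
  · simp [coeffA, pc1, Finset.powersetCard_zero, Finset.sum_pair (by decide : ({0} : Finset (Fin 2)) ≠ {1})]
  · simp [coeffA, pc2, Finset.powersetCard_zero, Fin.prod_univ_two]
  · simp only [coeffA, pc2, esymm, Finset.sum_singleton, Fin.prod_univ_two,
      Finset.mul_sum, Finset.prod_mul_distrib]
    refine Finset.sum_congr rfl fun I _ => by ring
end

section
/- The projection sending a normalized decoupled molecule with (n,2) sites (i.e., g_i = g_A = g_B = 1, w_{i,A}w_{i,B} = 1) together with its binding polynomial coefficients to the data (w_{1,A},...,w_{n,A}; a_{1,1},...,a_{n,1}) is a bijection onto the set of solutions of the system a_{k,1} = e_k(w_{1,A},...,w_{n,A}) + e_k(1/w_{1,A},...,1/w_{n,A}), k = 1,...,n, with all w_{i,A} ∈ ℂ*. -/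
/-- The set of normalized decoupled `(n,2)`-molecules together with their binding
polynomial coefficients `a : Fin (n+1) → Fin 3 → ℂ`. -/
def MNorm (n : ℕ) : Set ((Fin n → Fin 2 → ℂ) × (Fin (n + 1) → Fin 3 → ℂ)) :=
  {p | (∀ k S, p.1 k S ≠ 0) ∧ (∀ k, p.1 k 0 * p.1 k 1 = 1) ∧
    ∀ i j, p.2 i j = coeffA n (fun _ => 1) (fun _ => 1) p.1 i.1 j.1}

/-- The solution set of the normalized system
`a_{k,1} = e_k(w_A) + e_k(1/w_A)`, `k = 1,...,n`, `w_{i,A} ∈ ℂ*`. -/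
def VNorm (n : ℕ) : Set ((Fin n → ℂ) × (Fin n → ℂ)) :=
  {q | (∀ k, q.1 k ≠ 0) ∧
    ∀ k : Fin n, q.2 k = esymm n (k.1 + 1) q.1 + esymm n (k.1 + 1) (fun i => (q.1 i)⁻¹)}

lemma coeffA_one (n : ℕ) (w : Fin n → Fin 2 → ℂ) (i : ℕ) :
    coeffA n (fun _ => 1) (fun _ => 1) w i 1
      = esymm n i (fun k => w k 0) + esymm n i (fun k => w k 1) := by
  unfold coeffA esymm
  simp only [Finset.prod_const_one, one_mul, Finset.powersetCard_one, Finset.sum_map,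
    Function.Embedding.coeFn_mk, Finset.prod_singleton]
  rw [← Finset.sum_add_distrib]
  refine Finset.sum_congr rfl fun I _ => ?_
  rw [Fin.sum_univ_two]

/-- The projection `(w, a) ↦ (w_{•,A}; a_{1,1},...,a_{n,1})` maps the normalized
molecules bijectively onto the solutions of the normalized system. -/
theorem projection_bijective (n : ℕ) :
    Set.BijOn
      (fun p : (Fin n → Fin 2 → ℂ) × (Fin (n + 1) → Fin 3 → ℂ) =>
        ((fun k => p.1 k 0), fun k : Fin n => p.2 k.succ 1))
      (MNorm n) (VNorm n) := by
  constructor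
  · rintro ⟨w, a⟩ ⟨hne, hinv, ha⟩
    simp only at hne hinv ha
    refine ⟨fun k => hne k 0, fun k => ?_⟩
    simp only
    rw [ha k.succ 1, Fin.val_succ, show ((1 : Fin 3) : ℕ) = 1 from rfl, coeffA_one]
    congr 1
    unfold esymm
    refine Finset.sum_congr rfl fun s _ => Finset.prod_congr rfl fun j _ => ?_
    exact eq_inv_of_mul_eq_one_left (mul_comm (w j 0) (w j 1) ▸ hinv j)
  constructor
  · rintro ⟨w, a⟩ ⟨hne, hinv, ha⟩ ⟨w', a'⟩ ⟨hne', hinv', ha'⟩ heq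
    simp only at hne hinv ha hne' hinv' ha'
    rw [Prod.mk.injEq] at heq
    obtain ⟨h0, _⟩ := heq
    have hw : w = w' := by
      funext k S
      fin_cases S
      · exact congrFun h0 k
      · show w k 1 = w' k 1
        have e0 : w k 0 = w' k 0 := congrFun h0 k
        have h1 := hinv k
        have h2 := hinv' k
        rw [e0] at h1
        exact mul_left_cancel₀ (hne' k 0) (h1.trans h2.symm)
    have hw2 : a = a' := by
      funext i j
      rw [ha i j, ha' i j, hw]
    rw [Prod.mk.injEq]
    exact ⟨hw, hw2⟩
  · rintro ⟨wA, aa⟩ ⟨hne, hsys⟩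
    refine ⟨⟨fun k S => if S = 0 then wA k else (wA k)⁻¹,
      fun i j => coeffA n (fun _ => 1) (fun _ => 1)
        (fun k S => if S = 0 then wA k else (wA k)⁻¹) i.1 j.1⟩, ⟨?_, ?_, fun i j => rfl⟩, ?_⟩
    · intro k S
      by_cases h : S = 0 <;> simp [h, hne k, inv_ne_zero (hne k)]
    · intro k
      simp [mul_inv_cancel₀ (hne k)]
    · simp only [Prod.mk.injEq]
      constructor
      · funext k; simp
      · funext k
        show coeffA n (fun _ => 1) (fun _ => 1) _ (k.1 + 1) ((1 : Fin 3) : ℕ) = aa k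
        simp only at hsys
        rw [show ((1 : Fin 3) : ℕ) = 1 from rfl, coeffA_one, hsys k]
        congr 1
end
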